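/- For ℓ ∈ ℕ and 0 ≤ m ≤ ℓ define the associated Legendre function P_ℓ^m : (-1,1) → ℝ by P_ℓ^m(u) = (1 - u²)^{m/2} d^m/du^m P_ℓ(u), where P_ℓ(x) = (1/(2^ℓ ℓ!)) dℓ/dxℓ [ (x² - 1)^ℓ ] is the Legendre polynomial given by Rodrigues' formula. Then the function Θ(θ) = P_ℓ^m(cos θ) satisfies the polar equation on (0,π): for all θ ∈ (0,π), (1/ sin θ) d/dθ ( sin θ Θ'(θ) ) - (m² / sin²θ) Θ(θ) + ℓ(ℓ+1) Θ(θ) = 0. -/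

import Mathlib

/-!
For `w = (x² - 1)^ℓ` one has `(x² - 1) w' = 2ℓ x w`. Differentiating once gives an equation
`(1 - x²) y'' - 2(k + 1) x y' + c y = 0` for `y = w`, and differentiating such an equation
yields one of the same shape for `y'`, with `k` raised by one and `c` lowered by `2(k + 1)`.
After `ℓ + m` steps this is the equation of `d^m P_ℓ`, with `k = m` and
`c = ℓ(ℓ + 1) - m(m + 1)`. On `(0, π)` we have `P_ℓ^m(cos θ) = sin^m θ · (d^m P_ℓ)(cos θ)`,
and the substitution `u = cos θ` turns this equation into the polar equation.
-/

open Real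

/-- The Legendre polynomial of degree `ℓ`, given by Rodrigues' formula
`P_ℓ(x) = (1/(2^ℓ ℓ!)) dℓ/dxℓ [(x² - 1)^ℓ]`. -/
noncomputable def legendreP (ℓ : ℕ) (x : ℝ) : ℝ :=
  (1 / (2 ^ ℓ * (Nat.factorial ℓ : ℝ))) *
    iteratedDeriv ℓ (fun t : ℝ => (t ^ 2 - 1) ^ ℓ) x

/-- The associated Legendre function `P_ℓ^m(u) = (1-u²)^{m/2} (d^m/du^m) P_ℓ(u)`
(without the Condon–Shortley sign). -/
noncomputable def assocLegendreP (ℓ m : ℕ) (u : ℝ) : ℝ :=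
  (1 - u ^ 2) ^ ((m : ℝ) / 2) * iteratedDeriv m (legendreP ℓ) u

open Polynomial Filter Topology

theorem natCast_mul_pow_pred_mul {R : Type*} [Semiring R] (m : ℕ) (x : R) :
    (m : R) * x ^ (m - 1) * x = m * x ^ m := by
  rcases m with _ | m
  · simp
  · rw [mul_assoc, Nat.add_sub_cancel, ← pow_succ]

namespace Polynomial

variable {R : Type*} [CommRing R]

def SolvesLegendreODE (k c : R) (p : R[X]) : Prop :=
  (1 - X ^ 2) * p.derivative.derivative - C (2 * (k + 1)) * X * p.derivative + C c * p = 0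

namespace SolvesLegendreODE

variable {k c : R} {p : R[X]}

theorem derivative (h : SolvesLegendreODE k c p) :
    SolvesLegendreODE (k + 1) (c - 2 * (k + 1)) p.derivative := by
  have h' := congrArg Polynomial.derivative h
  simp only [SolvesLegendreODE, derivative_mul, derivative_C, derivative_one, derivative_X_pow,
    derivative_X, derivative_zero, derivative_ofNat, map_sub, map_mul, map_add, map_one, map_ofNat,
    Nat.cast_ofNat] at h' ⊢
  linear_combination h'

theorem iterate_derivative (h : SolvesLegendreODE k c p) (n : ℕ) :
    SolvesLegendreODE (k + n) (c - n * (2 * k + n + 1)) (Polynomial.derivative^[n] p) := by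
  induction n with
  | zero => simpa using h
  | succ n ih =>
    rw [Function.iterate_succ_apply', show k + ↑(n + 1) = k + n + 1 by push_cast; ring,
      show c - ↑(n + 1) * (2 * k + ↑(n + 1) + 1) = c - n * (2 * k + n + 1) - 2 * (k + n + 1) by
        push_cast; ring]
    exact ih.derivative

theorem C_mul (h : SolvesLegendreODE k c p) (a : R) : SolvesLegendreODE k c (C a * p) := by
  unfold SolvesLegendreODE at h ⊢
  simp only [derivative_C_mul]
  linear_combination C a * h

theorem eval (h : SolvesLegendreODE k c p) (x : R) :
    (1 - x ^ 2) * p.derivative.derivative.eval x - 2 * (k + 1) * x * p.derivative.eval x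
      + c * p.eval x = 0 := by
  simpa using congrArg (Polynomial.eval x) h

end SolvesLegendreODE

theorem X_sq_sub_one_mul_derivative_pow (ℓ : ℕ) :
    (X ^ 2 - 1) * derivative ((X ^ 2 - 1) ^ ℓ : R[X]) = C (2 * ℓ : R) * X * (X ^ 2 - 1) ^ ℓ := by
  rw [derivative_pow]
  simp only [map_sub, derivative_X_pow, derivative_one, map_mul, map_natCast, map_ofNat,
    Nat.cast_ofNat]
  linear_combination 2 * X * natCast_mul_pow_pred_mul ℓ (X ^ 2 - 1 : R[X])

theorem solvesLegendreODE_X_sq_sub_one_pow (ℓ : ℕ) :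
    SolvesLegendreODE (-ℓ : R) (2 * ℓ) ((X ^ 2 - 1) ^ ℓ) := by
  have h := congrArg derivative (X_sq_sub_one_mul_derivative_pow (R := R) ℓ)
  simp only [SolvesLegendreODE, derivative_mul, derivative_one, derivative_X_pow, derivative_X,
    derivative_ofNat, derivative_natCast, map_sub, map_mul, map_add, map_one,
    map_ofNat, map_neg, map_natCast, Nat.cast_ofNat] at h ⊢
  linear_combination -h

theorem iteratedDeriv_eval (p : ℝ[X]) (n : ℕ) :
    iteratedDeriv n (fun x => p.eval x) = fun x => (derivative^[n] p).eval x := by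
  induction n with
  | zero => simp
  | succ n ih =>
    ext x
    rw [iteratedDeriv_succ, ih, Polynomial.deriv, Function.iterate_succ_apply']

end Polynomial

noncomputable def legendrePoly (ℓ : ℕ) : ℝ[X] :=
  C (1 / (2 ^ ℓ * (Nat.factorial ℓ : ℝ))) * derivative^[ℓ] ((X ^ 2 - 1) ^ ℓ)

theorem solvesLegendreODE_iterate_derivative_legendrePoly (ℓ m : ℕ) :
    SolvesLegendreODE (m : ℝ) (ℓ * (ℓ + 1) - m * (m + 1)) (derivative^[m] (legendrePoly ℓ)) := by
  have h := ((solvesLegendreODE_X_sq_sub_one_pow ℓ).iterate_derivative (ℓ + m)).C_mul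
    (1 / (2 ^ ℓ * (Nat.factorial ℓ : ℝ)))
  rw [show -(ℓ : ℝ) + ↑(ℓ + m) = m by push_cast; ring,
    show 2 * (ℓ : ℝ) - ↑(ℓ + m) * (2 * -ℓ + ↑(ℓ + m) + 1) = ℓ * (ℓ + 1) - m * (m + 1) by
      push_cast; ring,
    add_comm ℓ m, Function.iterate_add_apply, ← iterate_derivative_C_mul] at h
  exact h

theorem legendreP_eq_eval (ℓ : ℕ) : legendreP ℓ = fun x => (legendrePoly ℓ).eval x := by
  have h := iteratedDeriv_eval ((X ^ 2 - 1) ^ ℓ : ℝ[X]) ℓ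
  simp only [eval_pow, eval_sub, eval_X, eval_one] at h
  funext x
  simp [legendreP, legendrePoly, h]

theorem assocLegendreP_cos (ℓ m : ℕ) (t : ℝ) :
    assocLegendreP ℓ m (cos t) = |sin t| ^ m * (derivative^[m] (legendrePoly ℓ)).eval (cos t) := by
  rw [assocLegendreP, legendreP_eq_eval, iteratedDeriv_eval, ← sin_sq,
    rpow_div_two_eq_sqrt _ (sq_nonneg _), sqrt_sq_eq_abs, rpow_natCast]

theorem polar_ode_sin_pow_mul_comp_cos {v v' v'' : ℝ → ℝ} (hv : ∀ x, HasDerivAt v (v' x) x)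
    (hv' : ∀ x, HasDerivAt v' (v'' x) x) (m : ℕ) (c : ℝ) {θ : ℝ} (hθ : sin θ ≠ 0)
    (hode : (1 - cos θ ^ 2) * v'' (cos θ) - 2 * (m + 1) * cos θ * v' (cos θ)
      + (c - m * (m + 1)) * v (cos θ) = 0) :
    (1 / sin θ) * deriv (fun t => sin t * deriv (fun t' => sin t' ^ m * v (cos t')) t) θ
      - ((m : ℝ) ^ 2 / sin θ ^ 2) * (sin θ ^ m * v (cos θ))
      + c * (sin θ ^ m * v (cos θ)) = 0 := by
  have hcomp : ∀ {f f' : ℝ → ℝ}, (∀ x, HasDerivAt f (f' x) x) →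
      ∀ t, HasDerivAt (fun t => f (cos t)) (f' (cos t) * -sin t) t :=
    fun hf t => (hf (cos t)).comp t (hasDerivAt_cos t)
  have hsinpow : ∀ (n : ℕ) (t : ℝ),
      HasDerivAt (fun t => sin t ^ n) (n * sin t ^ (n - 1) * cos t) t := fun n t => (hasDerivAt_sin t).pow n
  have hfirst : (fun t => sin t * deriv (fun t' => sin t' ^ m * v (cos t')) t)
      = fun t => m * sin t ^ m * cos t * v (cos t) - sin t ^ (m + 2) * v' (cos t) := by
    funext t
    rw [((hsinpow m t).fun_mul (hcomp hv t)).deriv]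
    linear_combination cos t * v (cos t) * natCast_mul_pow_pred_mul m (sin t)
  have hsecond := ((((hsinpow m θ).const_mul (m : ℝ)).fun_mul (hasDerivAt_cos θ)).fun_mul
    (hcomp hv θ)).fun_sub ((hsinpow (m + 2) θ).fun_mul (hcomp hv' θ))
  rw [hfirst, hsecond.deriv, show m + 2 - 1 = m + 1 by omega]
  field_simp
  push_cast
  linear_combination (m * cos θ ^ 2 * v (cos θ)) * natCast_mul_pow_pred_mul m (sin θ)
    + sin θ ^ (m + 2) * hode
    + (m ^ 2 * sin θ ^ m * v (cos θ) + sin θ ^ (m + 2) * v'' (cos θ)) * sin_sq θ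

theorem assocLegendre_polar_ode_general (ℓ m : ℕ) :
    ∀ θ ∈ Set.Ioo (0 : ℝ) π,
      (1 / Real.sin θ) *
        deriv (fun t => Real.sin t *
          deriv (fun t' => assocLegendreP ℓ m (Real.cos t')) t) θ
      - ((m : ℝ) ^ 2 / Real.sin θ ^ 2) * assocLegendreP ℓ m (Real.cos θ)
      + (ℓ : ℝ) * ((ℓ : ℝ) + 1) * assocLegendreP ℓ m (Real.cos θ) = 0 := by
  intro θ hθ
  set q := derivative^[m] (legendrePoly ℓ)
  have hA : (fun t => assocLegendreP ℓ m (cos t)) =ᶠ[𝓝 θ] fun t => sin t ^ m * q.eval (cos t) := by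
    filter_upwards [isOpen_Ioo.mem_nhds hθ] with t ht
    rw [assocLegendreP_cos, abs_of_pos (sin_pos_of_pos_of_lt_pi ht.1 ht.2)]
  have hsinA : (fun t => sin t * deriv (fun t' => assocLegendreP ℓ m (cos t')) t)
      =ᶠ[𝓝 θ] fun t => sin t * deriv (fun t' => sin t' ^ m * q.eval (cos t')) t :=
    hA.deriv.mono fun t ht => congrArg (sin t * ·) ht
  rw [hsinA.deriv_eq, hA.eq_of_nhds]
  exact polar_ode_sin_pow_mul_comp_cos (fun x => q.hasDerivAt x)
    (fun x => q.derivative.hasDerivAt x) m _ (sin_pos_of_pos_of_lt_pi hθ.1 hθ.2).ne'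
    ((solvesLegendreODE_iterate_derivative_legendrePoly ℓ m).eval (cos θ))

/-- `Θ(θ) = P_ℓ^m(cos θ)` satisfies the polar (associated Legendre) equation
`(1/sinθ)(sinθ Θ')' - (m²/sin²θ)Θ + ℓ(ℓ+1)Θ = 0` on `(0,π)`. -/
theorem assocLegendre_polar_ode (ℓ m : ℕ) (hm : m ≤ ℓ) :
    ∀ θ ∈ Set.Ioo (0 : ℝ) π,
      (1 / Real.sin θ) *
        deriv (fun t => Real.sin t *
          deriv (fun t' => assocLegendreP ℓ m (Real.cos t')) t) θ
      - ((m : ℝ) ^ 2 / Real.sin θ ^ 2) * assocLegendreP ℓ m (Real.cos θ)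
      + (ℓ : ℝ) * ((ℓ : ℝ) + 1) * assocLegendreP ℓ m (Real.cos θ) = 0 :=
  assocLegendre_polar_ode_general ℓ m
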